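/- For any real 2-form Ω on an n-dimensional Riemannian Spin^c manifold and any spinor ψ, one has the pointwise estimate ⟨iΩ·ψ, ψ⟩ ≥ −(c_n/2)|Ω|·|ψ|², where c_n = 2⌊n/2⌋^{1/2} and Ω acts by Clifford multiplication (eᵢ*∧eⱼ*)·ψ = eᵢ·eⱼ·ψ. -/

import Mathlib

/-!
The Gram matrix `G j k = ⟪e_j·ψ, e_k·ψ⟫` is positive semidefinite with diagonal `‖ψ‖²`, and the
Clifford relations make `H = G - ‖ψ‖²` skew-symmetric as well as Hermitian. Transposition
preserves positivity, so `-‖ψ‖² ≤ H ≤ ‖ψ‖²` and every eigenvalue of `H` has modulus at most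
`‖ψ‖²`; for odd `n` one of them vanishes, since `det H = det Hᵀ = -det H`. As the squared
Frobenius norm of `H` is the sum of its squared eigenvalues, `∑_{j<k} |G j k|² ≤ ⌊n/2⌋ ‖ψ‖⁴`.
Finally `Re ⟪iΩ·ψ, ψ⟫ = ∑_{j<k} Ω j k · Im G j k`, and Cauchy–Schwarz concludes.
-/

open Finset Matrix
open scoped MatrixOrder ComplexOrder InnerProductSpace

theorem Finset.sum_sq_le_two_mul_card_div_two_mul_sq {ι : Type*} [Fintype ι] {f : ι → ℝ} {s : ℝ}
    (hf : ∀ i, |f i| ≤ s) (hzero : Odd (Fintype.card ι) → ∃ i, f i = 0) :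
    ∑ i, f i ^ 2 ≤ 2 * (Fintype.card ι / 2 : ℕ) * s ^ 2 := by
  classical
  obtain ⟨S, hcard, hsupp⟩ : ∃ S : Finset ι, #S ≤ 2 * (Fintype.card ι / 2) ∧ ∀ i ∉ S, f i = 0 := by
    rcases Nat.even_or_odd (Fintype.card ι) with heven | hodd
    · exact ⟨univ, (card_univ.trans (Nat.two_mul_div_two_of_even heven).symm).le, by simp⟩
    · obtain ⟨i₀, hi₀⟩ := hzero hodd
      refine ⟨univ.erase i₀, ?_, fun i hi => ?_⟩
      · rw [card_erase_of_mem (mem_univ i₀), card_univ]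
        obtain ⟨k, hk⟩ := hodd
        omega
      · obtain rfl : i = i₀ := by simpa using hi
        exact hi₀
  calc ∑ i, f i ^ 2 = ∑ i ∈ S, f i ^ 2 :=
        (sum_subset (subset_univ S) fun i _ hi => by rw [hsupp i hi, zero_pow two_ne_zero]).symm
    _ ≤ ∑ _i ∈ S, s ^ 2 := sum_le_sum fun i _ => sq_le_sq' (abs_le.1 (hf i)).1 (abs_le.1 (hf i)).2
    _ = #S * s ^ 2 := by rw [sum_const, nsmul_eq_mul]
    _ ≤ 2 * (Fintype.card ι / 2 : ℕ) * s ^ 2 := by gcongr; exact_mod_cast hcard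

namespace Matrix

variable {ι : Type*} [Fintype ι] [DecidableEq ι]

theorem det_eq_zero_of_transpose_eq_neg {R : Type*} [CommRing R] [IsAddTorsionFree R]
    {A : Matrix ι ι R} (hA : Aᵀ = -A) (hodd : Odd (Fintype.card ι)) : A.det = 0 := by
  rw [← self_eq_neg]
  conv_lhs => rw [← det_transpose, hA, det_neg, hodd.neg_one_pow, neg_one_mul]

variable {𝕜 : Type*} [RCLike 𝕜] {A : Matrix ι ι 𝕜}

theorem le_algebraMap_of_transpose_eq_neg (hA : Aᵀ = -A) {s : ℝ}
    (h : algebraMap ℝ _ (-s) ≤ A) : A ≤ algebraMap ℝ (Matrix ι ι 𝕜) s := by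
  have hflip : algebraMap ℝ _ s - A = (A - algebraMap ℝ (Matrix ι ι 𝕜) (-s))ᵀ := by
    ext i j
    have hji : A j i = -A i j := congr_fun₂ hA i j
    rcases eq_or_ne i j with rfl | hij
    · simp only [sub_apply, algebraMap_matrix_apply, ↓reduceIte, map_neg, sub_neg_eq_add,
        transpose_apply, add_apply]
      linear_combination -hji
    · simp [algebraMap_matrix_apply, hij, hij.symm, hji]
  rw [le_iff] at h ⊢
  rw [hflip]
  exact h.transpose

namespace IsHermitian

theorem exists_eigenvalues_eq_zero (hA : A.IsHermitian) (h : A.det = 0) :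
    ∃ i, hA.eigenvalues i = 0 := by
  rw [hA.det_eq_prod_eigenvalues, prod_eq_zero_iff] at h
  obtain ⟨i, -, hi⟩ := h
  exact ⟨i, by exact_mod_cast hi⟩

theorem abs_eigenvalues_le (hA : A.IsHermitian) {s : ℝ} (hlow : algebraMap ℝ _ (-s) ≤ A)
    (hup : A ≤ algebraMap ℝ _ s) (i : ι) : |hA.eigenvalues i| ≤ s := by
  have hmem := hA.eigenvalues_mem_spectrum_real i
  exact abs_le.2 ⟨(algebraMap_le_iff_le_spectrum (R := ℝ) hA).1 hlow _ hmem,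
    (le_algebraMap_iff_spectrum_le (R := ℝ) hA).1 hup _ hmem⟩

theorem sum_norm_sq_eq_sum_eigenvalues_sq (hA : A.IsHermitian) :
    ∑ i, ∑ j, ‖A i j‖ ^ 2 = ∑ i, hA.eigenvalues i ^ 2 := by
  have htrace : (A * A).trace = ∑ i, ((hA.eigenvalues i ^ 2 : ℝ) : 𝕜) := by
    conv_lhs => rw [hA.spectral_theorem, ← map_mul, Unitary.conjStarAlgAut_apply, trace_mul_cycle,
      Unitary.coe_star_mul_self, one_mul, diagonal_mul_diagonal, trace_diagonal]
    simp [sq]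
  have hentries : (A * A).trace = ∑ i, ∑ j, ((‖A i j‖ ^ 2 : ℝ) : 𝕜) := by
    simp only [trace, diag_apply, mul_apply]
    refine sum_congr rfl fun i _ => sum_congr rfl fun j _ => ?_
    rw [← hA.apply j i, RCLike.star_def, RCLike.mul_conj, RCLike.ofReal_pow]
  exact_mod_cast hentries.symm.trans htrace

theorem sum_norm_sq_le_of_transpose_eq_neg (hA : A.IsHermitian) (hskew : Aᵀ = -A) {s : ℝ}
    (hs : algebraMap ℝ _ (-s) ≤ A) :
    ∑ i, ∑ j, ‖A i j‖ ^ 2 ≤ 2 * (Fintype.card ι / 2 : ℕ) * s ^ 2 := by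
  rw [hA.sum_norm_sq_eq_sum_eigenvalues_sq]
  exact sum_sq_le_two_mul_card_div_two_mul_sq
    (hA.abs_eigenvalues_le hs (le_algebraMap_of_transpose_eq_neg hskew hs))
    fun hodd => hA.exists_eigenvalues_eq_zero (det_eq_zero_of_transpose_eq_neg hskew hodd)

end IsHermitian

end Matrix

section UpperTriangularSums

variable {ι : Type*} [Fintype ι] [LinearOrder ι]

theorem Finset.sum_sum_eq_two_mul_sum_sum_ite_lt {f : ι → ι → ℝ} (hsymm : ∀ i j, f j i = f i j)
    (hdiag : ∀ i, f i i = 0) :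
    ∑ i, ∑ j, f i j = 2 * ∑ i, ∑ j, if i < j then f i j else 0 := by
  have hsplit : ∀ i j, f i j = (if i < j then f i j else 0) + (if j < i then f j i else 0) := by
    intro i j
    rcases lt_trichotomy i j with h | rfl | h
    · simp [h, h.not_gt]
    · simp [hdiag]
    · simp [h, h.not_gt, hsymm]
  calc ∑ i, ∑ j, f i j
      = ∑ i, ∑ j, ((if i < j then f i j else 0) + (if j < i then f j i else 0)) :=
        sum_congr rfl fun i _ => sum_congr rfl fun j _ => hsplit i j
    _ = 2 * ∑ i, ∑ j, if i < j then f i j else 0 := by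
        simp only [sum_add_distrib]
        rw [Finset.sum_comm (f := fun i j => if j < i then f j i else 0)]
        ring

theorem neg_sqrt_mul_sqrt_le_sum_sum_ite_lt_mul (a b : ι → ι → ℝ) :
    -(√(∑ i, ∑ j, if i < j then a i j ^ 2 else 0) * √(∑ i, ∑ j, if i < j then b i j ^ 2 else 0)) ≤
      ∑ i, ∑ j, if i < j then a i j * b i j else 0 := by
  have hfilter : ∀ F : ι → ι → ℝ, ∑ i, ∑ j, (if i < j then F i j else 0) =
      ∑ p ∈ univ.filter (fun p : ι × ι => p.1 < p.2), F p.1 p.2 := fun F => by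
    rw [sum_filter, ← Fintype.sum_prod_type']
  have hcs := Real.sum_mul_le_sqrt_mul_sqrt (univ.filter (fun p : ι × ι => p.1 < p.2))
    (fun p => -a p.1 p.2) (fun p => b p.1 p.2)
  simp only [neg_mul, sum_neg_distrib, neg_sq] at hcs
  rw [hfilter, hfilter, hfilter]
  linarith

end UpperTriangularSums

section Clifford

variable {E ι : Type*} [NormedAddCommGroup E] [InnerProductSpace ℂ E] {c : ι → E →ₗ[ℂ] E}

theorem inner_clifford_apply_self (hskew : ∀ i (φ χ : E), ⟪c i φ, χ⟫_ℂ = -⟪φ, c i χ⟫_ℂ)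
    (hsq : ∀ i (φ : E), c i (c i φ) = -φ) (i : ι) (ψ : E) :
    ⟪c i ψ, c i ψ⟫_ℂ = (‖ψ‖ ^ 2 : ℝ) := by
  rw [hskew, hsq, inner_neg_right, neg_neg, inner_self_eq_norm_sq_to_K]
  push_cast
  rfl

theorem inner_clifford_apply_comm (hskew : ∀ i (φ χ : E), ⟪c i φ, χ⟫_ℂ = -⟪φ, c i χ⟫_ℂ)
    (hanti : ∀ i j, i ≠ j → ∀ φ : E, c i (c j φ) = -c j (c i φ)) {i j : ι} (hij : i ≠ j)
    (ψ : E) : ⟪c i ψ, c j ψ⟫_ℂ = -⟪c j ψ, c i ψ⟫_ℂ := by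
  rw [hskew i ψ, hanti i j hij, inner_neg_right, neg_neg, hskew j ψ, neg_neg]

theorem inner_clifford_mul_apply (hskew : ∀ i (φ χ : E), ⟪c i φ, χ⟫_ℂ = -⟪φ, c i χ⟫_ℂ)
    (hanti : ∀ i j, i ≠ j → ∀ φ : E, c i (c j φ) = -c j (c i φ)) {i j : ι} (hij : i ≠ j)
    (ψ : E) : ⟪c i (c j ψ), ψ⟫_ℂ = ⟪c i ψ, c j ψ⟫_ℂ := by
  rw [hskew, inner_clifford_apply_comm hskew hanti hij]

variable [Fintype ι] [LinearOrder ι]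

theorem sum_sum_ite_lt_norm_inner_clifford_sq_le
    (hskew : ∀ i (φ χ : E), ⟪c i φ, χ⟫_ℂ = -⟪φ, c i χ⟫_ℂ) (hsq : ∀ i (φ : E), c i (c i φ) = -φ)
    (hanti : ∀ i j, i ≠ j → ∀ φ : E, c i (c j φ) = -c j (c i φ)) (ψ : E) :
    ∑ i, ∑ j, (if i < j then ‖⟪c i ψ, c j ψ⟫_ℂ‖ ^ 2 else 0) ≤
      (Fintype.card ι / 2 : ℕ) * (‖ψ‖ ^ 2) ^ 2 := by
  set H := gram ℂ (fun i => c i ψ) - algebraMap ℝ (Matrix ι ι ℂ) (‖ψ‖ ^ 2) with hH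
  have hentry : ∀ i j, H i j = if i = j then 0 else ⟪c i ψ, c j ψ⟫_ℂ := by
    intro i j
    rcases eq_or_ne i j with rfl | hij
    · rw [hH, Matrix.sub_apply, gram_apply, algebraMap_matrix_apply, if_pos rfl, if_pos rfl,
        inner_clifford_apply_self hskew hsq, Complex.coe_algebraMap, sub_self]
    · rw [hH, Matrix.sub_apply, gram_apply, algebraMap_matrix_apply, if_neg hij, if_neg hij,
        sub_zero]
  have hherm : H.IsHermitian :=
    (isHermitian_gram ℂ _).sub (IsSelfAdjoint.algebraMap _ (IsSelfAdjoint.all _))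
  have hskewH : Hᵀ = -H := by
    ext i j
    rw [transpose_apply, Matrix.neg_apply, hentry, hentry]
    rcases eq_or_ne i j with rfl | hij
    · simp
    · simp [hij, hij.symm, inner_clifford_apply_comm hskew hanti hij]
  have hgram : algebraMap ℝ _ (-(‖ψ‖ ^ 2)) ≤ H := by
    rw [le_iff, hH, map_neg, sub_neg_eq_add, sub_add_cancel]
    exact posSemidef_gram ℂ _
  have hbound := hherm.sum_norm_sq_le_of_transpose_eq_neg hskewH hgram
  rw [sum_sum_eq_two_mul_sum_sum_ite_lt (fun i j => by rw [← hherm.apply i j, norm_star])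
    (fun i => by simp [hentry])] at hbound
  have hupper : ∑ i, ∑ j, (if i < j then ‖H i j‖ ^ 2 else 0) =
      ∑ i, ∑ j, (if i < j then ‖⟪c i ψ, c j ψ⟫_ℂ‖ ^ 2 else 0) :=
    sum_congr rfl fun i _ => sum_congr rfl fun j _ => by
      split_ifs with hij
      · rw [hentry, if_neg hij.ne]
      · rfl
  linarith

theorem re_inner_I_smul_sum_sum_ite_lt (hskew : ∀ i (φ χ : E), ⟪c i φ, χ⟫_ℂ = -⟪φ, c i χ⟫_ℂ)
    (hanti : ∀ i j, i ≠ j → ∀ φ : E, c i (c j φ) = -c j (c i φ)) (Ω : ι → ι → ℝ) (ψ : E) :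
    (⟪Complex.I • ∑ i, ∑ j, if i < j then (Ω i j : ℂ) • c i (c j ψ) else 0, ψ⟫_ℂ).re =
      ∑ i, ∑ j, if i < j then Ω i j * (⟪c i ψ, c j ψ⟫_ℂ).im else 0 := by
  simp only [inner_smul_left, sum_inner, mul_sum, Complex.re_sum]
  refine sum_congr rfl fun i _ => sum_congr rfl fun j _ => ?_
  split_ifs with hij
  · rw [inner_smul_left, inner_clifford_mul_apply hskew hanti hij.ne]
    simp
  · simp

end Clifford

theorem two_form_clifford_estimate_general {Sp : Type*} [NormedAddCommGroup Sp]
    [InnerProductSpace ℂ Sp] (n : ℕ)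
    (c : Fin n → Sp →ₗ[ℂ] Sp)
    (hskew : ∀ i (φ χ : Sp), (inner ℂ (c i φ) χ : ℂ) = -(inner ℂ φ (c i χ) : ℂ))
    (hsq : ∀ i (φ : Sp), c i (c i φ) = -φ)
    (hanti : ∀ i j, i ≠ j → ∀ φ : Sp, c i (c j φ) = -c j (c i φ))
    (Ω : Fin n → Fin n → ℝ) (ψ : Sp) :
    -(2 * Real.sqrt (n / 2 : ℕ) / 2) *
        Real.sqrt (∑ i, ∑ j, if i < j then (Ω i j) ^ 2 else 0) * ‖ψ‖ ^ 2 ≤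
      (inner ℂ (Complex.I • ∑ i, ∑ j, if i < j then (Ω i j : ℂ) • c i (c j ψ) else 0) ψ : ℂ).re := by
  set G : Fin n → Fin n → ℝ := fun i j => (⟪c i ψ, c j ψ⟫_ℂ).im
  set normΩ := √(∑ i, ∑ j, if i < j then Ω i j ^ 2 else 0)
  have hG : ∑ i, ∑ j, (if i < j then G i j ^ 2 else 0) ≤ (n / 2 : ℕ) * (‖ψ‖ ^ 2) ^ 2 := by
    refine le_trans (sum_le_sum fun i _ => sum_le_sum fun j _ => ?_)
      ((sum_sum_ite_lt_norm_inner_clifford_sq_le hskew hsq hanti ψ).trans_eq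
        (by rw [Fintype.card_fin]))
    split_ifs
    · exact sq_le_sq.2 ((Complex.abs_im_le_norm _).trans_eq (abs_norm _).symm)
    · exact le_rfl
  have hsqrtG : √(∑ i, ∑ j, if i < j then G i j ^ 2 else 0) ≤ √(n / 2 : ℕ) * ‖ψ‖ ^ 2 := by
    rw [← Real.sqrt_sq (by positivity : 0 ≤ ‖ψ‖ ^ 2), ← Real.sqrt_mul (Nat.cast_nonneg _)]
    exact Real.sqrt_le_sqrt hG
  rw [re_inner_I_smul_sum_sum_ite_lt hskew hanti]
  calc -(2 * √(n / 2 : ℕ) / 2) * normΩ * ‖ψ‖ ^ 2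
      = -(normΩ * (√(n / 2 : ℕ) * ‖ψ‖ ^ 2)) := by ring
    _ ≤ -(normΩ * √(∑ i, ∑ j, if i < j then G i j ^ 2 else 0)) :=
        neg_le_neg (mul_le_mul_of_nonneg_left hsqrtG (Real.sqrt_nonneg _))
    _ ≤ _ := neg_sqrt_mul_sqrt_le_sum_sum_ite_lt_mul Ω G

/-- Curvature term estimate (algebraic model): for a real 2-form `Ω` acting on a
Hermitian Clifford module by `Ω·ψ = Σ_{i<j} Ω_{ij} eᵢ·eⱼ·ψ`, one has
`⟨iΩ·ψ, ψ⟩ ≥ −(c_n/2)|Ω||ψ|²` with `c_n = 2⌊n/2⌋^{1/2}`. -/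
theorem two_form_clifford_estimate {Sp : Type*} [NormedAddCommGroup Sp]
    [InnerProductSpace ℂ Sp] (n : ℕ) (hn : 2 ≤ n)
    (c : Fin n → Sp →ₗ[ℂ] Sp)
    (hskew : ∀ i (φ χ : Sp), (inner ℂ (c i φ) χ : ℂ) = -(inner ℂ φ (c i χ) : ℂ))
    (hsq : ∀ i (φ : Sp), c i (c i φ) = -φ)
    (hanti : ∀ i j, i ≠ j → ∀ φ : Sp, c i (c j φ) = -c j (c i φ))
    (Ω : Fin n → Fin n → ℝ) (ψ : Sp) :
    -(2 * Real.sqrt (n / 2 : ℕ) / 2) *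
        Real.sqrt (∑ i, ∑ j, if i < j then (Ω i j) ^ 2 else 0) * ‖ψ‖ ^ 2 ≤
      (inner ℂ (Complex.I • ∑ i, ∑ j, if i < j then (Ω i j : ℂ) • c i (c j ψ) else 0) ψ : ℂ).re :=
  two_form_clifford_estimate_general n c hskew hsq hanti Ω ψ
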